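/- arXiv:math/0610695 — 6 statements merged into one kernel-verified Lean document; each statement's English description precedes it below -/
import Mathlib

section
/- The bending maps form a smooth family through the identity: the map Ψ : ℝ × ℝ³ → ℝ³ defined by Ψ(τ, x, y, z) = ((e^{τx} cos(τy) − 1)/τ, e^{τx} sin(τy)/τ, z) for τ ≠ 0 and Ψ(0, x, y, z) = (x, y, z) is infinitely differentiable (C^∞) on all of ℝ × ℝ³. -/
open Complex Filter Topology

/-- The family of bending maps: `Ψ(τ, x, y, z) = Φ_τ(x, y, z)` for `τ ≠ 0`, and
`Ψ(0, ·)` is the identity. -/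
noncomputable def bendingFamily (q : ℝ × ℝ × ℝ × ℝ) : ℝ × ℝ × ℝ :=
  if q.1 = 0 then (q.2.1, q.2.2.1, q.2.2.2)
  else ((Real.exp (q.1 * q.2.1) * Real.cos (q.1 * q.2.2.1) - 1) / q.1,
        Real.exp (q.1 * q.2.1) * Real.sin (q.1 * q.2.2.1) / q.1, q.2.2.2)


/-- The entire function `(exp z - 1)/z` extended by `1` at `0`. -/
noncomputable def Efun (z : ℂ) : ℂ := if z = 0 then 1 else (Complex.exp z - 1) / z

lemma Efun_continuousAt_zero : ContinuousAt Efun 0 := by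
  have h : Tendsto (slope Complex.exp 0) (𝓝[≠] 0) (𝓝 1) := by
    have := (Complex.hasDerivAt_exp 0)
    rw [hasDerivAt_iff_tendsto_slope] at this
    simpa using this
  have heq : ∀ z : ℂ, z ≠ 0 → slope Complex.exp 0 z = Efun z := by
    intro z hz
    simp [slope, Efun, hz, Complex.exp_zero, div_eq_inv_mul]
  have h2 : Tendsto Efun (𝓝[≠] 0) (𝓝 1) := by
    refine h.congr' ?_
    filter_upwards [self_mem_nhdsWithin] with z hz
    exact heq z hz
  have : Tendsto Efun (𝓝 0) (𝓝 1) := by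
    rw [← nhdsNE_sup_pure 0]
    refine Tendsto.sup h2 ?_
    have h0 : Efun 0 = 1 := by simp [Efun]
    simpa [h0] using tendsto_pure_nhds Efun 0
  simpa [ContinuousAt, Efun] using this

lemma Efun_differentiable : Differentiable ℂ Efun := by
  intro z
  rcases eq_or_ne z 0 with rfl | hz
  · have ha : AnalyticAt ℂ Efun 0 := by
      apply Complex.analyticAt_of_differentiable_on_punctured_nhds_of_continuousAt
        _ Efun_continuousAt_zero
      filter_upwards [self_mem_nhdsWithin] with w hw
      have : Set.EqOn (fun z : ℂ => (Complex.exp z - 1) / z) Efun {0}ᶜ := by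
        intro u hu; have hu' : u ≠ 0 := hu; simp [Efun, hu']
      have hd : DifferentiableAt ℂ (fun z : ℂ => (Complex.exp z - 1) / z) w :=
        ((Complex.differentiable_exp w).sub_const 1).div (differentiableAt_fun_id) hw
      exact hd.congr_of_eventuallyEq
        ((this.eventuallyEq_of_mem (isOpen_compl_singleton.mem_nhds hw)).symm)
    exact ha.differentiableAt
  · have : Set.EqOn (fun z : ℂ => (Complex.exp z - 1) / z) Efun {0}ᶜ := by
      intro u hu; have hu' : u ≠ 0 := hu; simp [Efun, hu']
    have hd : DifferentiableAt ℂ (fun z : ℂ => (Complex.exp z - 1) / z) z :=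
      ((Complex.differentiable_exp z).sub_const 1).div (differentiableAt_fun_id) hz
    exact hd.congr_of_eventuallyEq
      ((this.eventuallyEq_of_mem (isOpen_compl_singleton.mem_nhds hz)).symm)

lemma Efun_contDiff : ContDiff ℝ (⊤ : ℕ∞) Efun := by
  have : AnalyticOnNhd ℂ Efun Set.univ :=
    analyticOnNhd_univ_iff_differentiable.2 Efun_differentiable
  exact (this.contDiff (n := (⊤ : ℕ∞))).restrict_scalars ℝ

lemma bendingFamily_eq (q : ℝ × ℝ × ℝ × ℝ) :
    bendingFamily q =
      ((((q.2.1 : ℂ) + (q.2.2.1 : ℂ) * Complex.I) *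
          Efun ((q.1 : ℂ) * ((q.2.1 : ℂ) + (q.2.2.1 : ℂ) * Complex.I))).re,
       (((q.2.1 : ℂ) + (q.2.2.1 : ℂ) * Complex.I) *
          Efun ((q.1 : ℂ) * ((q.2.1 : ℂ) + (q.2.2.1 : ℂ) * Complex.I))).im,
       q.2.2.2) := by
  obtain ⟨τ, x, y, z⟩ := q
  dsimp only
  set w : ℂ := (x : ℂ) + (y : ℂ) * Complex.I with hw
  rcases eq_or_ne τ 0 with rfl | hτ
  · simp [bendingFamily, Efun, hw]
  · have hτC : (τ : ℂ) ≠ 0 := by exact_mod_cast hτ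
    rcases eq_or_ne w 0 with hw0 | hw0
    · have hx : x = 0 ∧ y = 0 := by
        constructor
        · have := congrArg Complex.re hw0; simpa [hw] using this
        · have := congrArg Complex.im hw0; simpa [hw] using this
      obtain ⟨rfl, rfl⟩ := hx
      simp [bendingFamily, hτ, hw0]
    · have hτw : (τ : ℂ) * w ≠ 0 := mul_ne_zero hτC hw0
      have key : w * Efun ((τ : ℂ) * w) = (Complex.exp ((τ : ℂ) * w) - 1) / (τ : ℂ) := by
        rw [Efun, if_neg hτw]
        field_simp
      have hre : ((τ : ℂ) * w).re = τ * x := by simp [hw]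
      have him : ((τ : ℂ) * w).im = τ * y := by simp [hw]
      rw [key]
      simp only [bendingFamily, hτ, if_false, Prod.mk.injEq]
      refine ⟨?_, ?_, trivial⟩
      · rw [Complex.div_ofReal_re]
        congr 1
        rw [Complex.sub_re, Complex.exp_re, hre, him]
        simp
      · rw [Complex.div_ofReal_im]
        congr 1
        rw [Complex.sub_im, Complex.exp_im, hre, him]
        simp

/-- The bending maps form a smooth family through the identity: `Ψ` is `C^∞` on all of
`ℝ × ℝ³`. -/
theorem bendingFamily_smooth : ContDiff ℝ (⊤ : ℕ∞) bendingFamily := by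
  have hrw : bendingFamily = fun q : ℝ × ℝ × ℝ × ℝ =>
      ((((q.2.1 : ℂ) + (q.2.2.1 : ℂ) * Complex.I) *
          Efun ((q.1 : ℂ) * ((q.2.1 : ℂ) + (q.2.2.1 : ℂ) * Complex.I))).re,
       (((q.2.1 : ℂ) + (q.2.2.1 : ℂ) * Complex.I) *
          Efun ((q.1 : ℂ) * ((q.2.1 : ℂ) + (q.2.2.1 : ℂ) * Complex.I))).im,
       q.2.2.2) := funext bendingFamily_eq
  rw [hrw]
  have hw : ContDiff ℝ (⊤ : ℕ∞) fun q : ℝ × ℝ × ℝ × ℝ =>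
      (q.2.1 : ℂ) + (q.2.2.1 : ℂ) * Complex.I := by
    apply ContDiff.add
    · exact Complex.ofRealCLM.contDiff.comp (contDiff_fst.comp contDiff_snd)
    · exact (Complex.ofRealCLM.contDiff.comp
        (contDiff_fst.comp (contDiff_snd.comp contDiff_snd))).mul contDiff_const
  have hτ : ContDiff ℝ (⊤ : ℕ∞) fun q : ℝ × ℝ × ℝ × ℝ => (q.1 : ℂ) :=
    Complex.ofRealCLM.contDiff.comp contDiff_fst
  have hmain : ContDiff ℝ (⊤ : ℕ∞) fun q : ℝ × ℝ × ℝ × ℝ =>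
      ((q.2.1 : ℂ) + (q.2.2.1 : ℂ) * Complex.I) *
        Efun ((q.1 : ℂ) * ((q.2.1 : ℂ) + (q.2.2.1 : ℂ) * Complex.I)) :=
    hw.mul (Efun_contDiff.comp (hτ.mul hw))
  exact (ContDiff.prodMk (Complex.reCLM.contDiff.comp hmain)
    (ContDiff.prodMk (Complex.imCLM.contDiff.comp hmain)
      (contDiff_snd.comp (contDiff_snd.comp contDiff_snd))))
end

section
/- The Gauss map restricted to a fundamental piece of the Scherk surface is a bijection onto a closed half-sphere minus four points: the map (x, y, z) ↦ ν(x, y, z) = (tanh z, −cos y/(cosh x · cosh z), tanh x), restricted to the set {(x, y, z) ∈ ℝ³ : sin y = sinh x · sinh z and −π/2 ≤ y ≤ π/2}, is a bijection onto the set {(a, b, c) ∈ ℝ³ : a² + b² + c² = 1, b ≤ 0, |a| < 1, |c| < 1} (which equals the half-sphere {b ≤ 0} of the unit sphere with the four points (±1, 0, 0), (0, 0, ±1) removed). -/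
open Real

/-- The Gauss map of the Scherk surface. -/
noncomputable def scherkGauss (p : ℝ × ℝ × ℝ) : ℝ × ℝ × ℝ :=
  (Real.tanh p.2.2, -Real.cos p.2.1 / (Real.cosh p.1 * Real.cosh p.2.2), Real.tanh p.1)

private lemma abs_sinh_lt_cosh (x : ℝ) : |Real.sinh x| < Real.cosh x := by
  have h := Real.cosh_sq x
  have hc := Real.cosh_pos x
  nlinarith [abs_nonneg (Real.sinh x), sq_abs (Real.sinh x)]

private lemma abs_tanh_lt_one (x : ℝ) : |Real.tanh x| < 1 := by
  rw [Real.tanh_eq_sinh_div_cosh, abs_div, abs_of_pos (Real.cosh_pos x),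
    div_lt_one (Real.cosh_pos x)]
  exact abs_sinh_lt_cosh x

private lemma tanh_injective : Function.Injective Real.tanh := by
  intro x y h
  rw [Real.tanh_eq_sinh_div_cosh, Real.tanh_eq_sinh_div_cosh,
    div_eq_div_iff (Real.cosh_pos x).ne' (Real.cosh_pos y).ne'] at h
  have : Real.sinh (x - y) = 0 := by rw [Real.sinh_sub]; linarith
  have := Real.sinh_eq_zero.mp this
  linarith

private lemma tanh_surj {t : ℝ} (ht : |t| < 1) : ∃ x, Real.tanh x = t := by
  have h1 : (0:ℝ) < 1 - t ^ 2 := by nlinarith [sq_abs t, abs_nonneg t]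
  refine ⟨Real.arsinh (t / Real.sqrt (1 - t ^ 2)), ?_⟩
  have hs : Real.sqrt (1 - t ^ 2) > 0 := Real.sqrt_pos.mpr h1
  have hsq : Real.sqrt (1 - t ^ 2) ^ 2 = 1 - t ^ 2 := Real.sq_sqrt h1.le
  set x := Real.arsinh (t / Real.sqrt (1 - t ^ 2)) with hx
  have hsinh : Real.sinh x = t / Real.sqrt (1 - t ^ 2) := Real.sinh_arsinh _
  have hcosh : Real.cosh x = 1 / Real.sqrt (1 - t ^ 2) := by
    have h2 : Real.cosh x ^ 2 = (1 / Real.sqrt (1 - t ^ 2)) ^ 2 := by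
      rw [Real.cosh_sq, hsinh, div_pow, div_pow, hsq, one_pow]
      field_simp
      ring
    have := Real.cosh_pos x
    nlinarith [sq_nonneg (Real.cosh x - 1 / Real.sqrt (1 - t ^ 2)), one_div_pos.mpr hs]
  rw [Real.tanh_eq_sinh_div_cosh, hsinh, hcosh]
  field_simp

/-- The Gauss map restricted to the fundamental piece
`{sin y = sinh x · sinh z, -π/2 ≤ y ≤ π/2}` of the Scherk surface is a bijection onto the
closed half-sphere `{b ≤ 0}` of the unit sphere minus the four points
`(±1,0,0), (0,0,±1)`. -/
theorem scherkGauss_bijOn :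
    Set.BijOn scherkGauss
      {p : ℝ × ℝ × ℝ | Real.sin p.2.1 = Real.sinh p.1 * Real.sinh p.2.2 ∧
        -(π / 2) ≤ p.2.1 ∧ p.2.1 ≤ π / 2}
      {q : ℝ × ℝ × ℝ | q.1 ^ 2 + q.2.1 ^ 2 + q.2.2 ^ 2 = 1 ∧ q.2.1 ≤ 0 ∧
        |q.1| < 1 ∧ |q.2.2| < 1} := by
  constructor
  · -- MapsTo
    rintro ⟨x, y, z⟩ ⟨hs, hy1, hy2⟩
    have hcx := Real.cosh_sq x
    have hcz := Real.cosh_sq z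
    have hpx := Real.cosh_pos x
    have hpz := Real.cosh_pos z
    have hcos : Real.cos y ^ 2 = 1 - (Real.sinh x * Real.sinh z) ^ 2 := by
      have := Real.sin_sq_add_cos_sq y
      rw [← hs]; linarith
    refine ⟨?_, ?_, _root_.abs_tanh_lt_one z, _root_.abs_tanh_lt_one x⟩
    · show Real.tanh z ^ 2 + (-Real.cos y / (Real.cosh x * Real.cosh z)) ^ 2 +
        Real.tanh x ^ 2 = 1
      have hmain : Real.sinh z ^ 2 * Real.cosh x ^ 2 + Real.cos y ^ 2 +
          Real.sinh x ^ 2 * Real.cosh z ^ 2 = Real.cosh x ^ 2 * Real.cosh z ^ 2 := by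
        linear_combination (Real.sinh z ^ 2 - Real.cosh z ^ 2) * hcx + hcos - hcz
      rw [Real.tanh_eq_sinh_div_cosh, Real.tanh_eq_sinh_div_cosh]
      field_simp
      linear_combination hmain
    · show -Real.cos y / (Real.cosh x * Real.cosh z) ≤ 0
      have hc : 0 ≤ Real.cos y := Real.cos_nonneg_of_mem_Icc ⟨hy1, hy2⟩
      exact div_nonpos_iff.mpr (Or.inr ⟨by linarith, (mul_pos hpx hpz).le⟩)
  constructor
  · -- InjOn
    rintro ⟨x, y, z⟩ ⟨hs, hy1, hy2⟩ ⟨x', y', z'⟩ ⟨hs', hy1', hy2'⟩ heq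
    simp only [scherkGauss, Prod.mk.injEq] at heq
    obtain ⟨h1, h2, h3⟩ := heq
    have hz : z = z' := _root_.tanh_injective h1
    have hx : x = x' := _root_.tanh_injective h3
    subst hz hx
    have hcos : Real.cos y = Real.cos y' := by
      have hne : Real.cosh x * Real.cosh z ≠ 0 :=
        (mul_pos (Real.cosh_pos x) (Real.cosh_pos z)).ne'
      field_simp at h2
      linarith
    have hsin : Real.sin y = Real.sin y' := by rw [hs, hs']
    have : y = y' := Real.injOn_sin ⟨hy1, hy2⟩ ⟨hy1', hy2'⟩ hsin
    simp [this]
  · -- SurjOn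
    rintro ⟨a, b, c⟩ ⟨hsum, hb, ha, hc⟩
    dsimp only at hsum hb ha hc
    obtain ⟨z, hz⟩ := tanh_surj ha
    obtain ⟨x, hx⟩ := tanh_surj hc
    have hcx := Real.cosh_sq x
    have hcz := Real.cosh_sq z
    have hpx := Real.cosh_pos x
    have hpz := Real.cosh_pos z
    have hsz : Real.sinh z = a * Real.cosh z := by
      rw [← hz, Real.tanh_eq_sinh_div_cosh]; field_simp
    have hsx : Real.sinh x = c * Real.cosh x := by
      rw [← hx, Real.tanh_eq_sinh_div_cosh]; field_simp
    set s := Real.sinh x * Real.sinh z with hsdef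
    have key : s ^ 2 + (b * (Real.cosh x * Real.cosh z)) ^ 2 = 1 := by
      have h1 : (a * Real.cosh z) ^ 2 = Real.cosh z ^ 2 - 1 := by
        rw [← hsz]; linarith [Real.cosh_sq z]
      have h2 : (c * Real.cosh x) ^ 2 = Real.cosh x ^ 2 - 1 := by
        rw [← hsx]; linarith [Real.cosh_sq x]
      have hb2 : b ^ 2 = 1 - a ^ 2 - c ^ 2 := by linarith
      have hs2 : s ^ 2 = (Real.cosh x ^ 2 - 1) * (Real.cosh z ^ 2 - 1) := by
        rw [hsdef, hsx, hsz]
        linear_combination (c * Real.cosh x) ^ 2 * h1 + (Real.cosh z ^ 2 - 1) * h2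
      rw [hs2]
      linear_combination (Real.cosh x ^ 2 * Real.cosh z ^ 2) * hb2 -
        Real.cosh x ^ 2 * h1 - Real.cosh z ^ 2 * h2
    have hs1 : s ^ 2 ≤ 1 := by nlinarith [sq_nonneg (b * (Real.cosh x * Real.cosh z))]
    have hsle : -1 ≤ s ∧ s ≤ 1 :=
      ⟨by nlinarith [sq_nonneg (s + 1)], by nlinarith [sq_nonneg (s - 1)]⟩
    refine ⟨(x, Real.arcsin s, z), ⟨?_, ?_, ?_⟩, ?_⟩
    · exact Real.sin_arcsin hsle.1 hsle.2
    · exact (Real.arcsin_mem_Icc s).1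
    · exact (Real.arcsin_mem_Icc s).2
    · have hcosb : Real.cos (Real.arcsin s) = -(b * (Real.cosh x * Real.cosh z)) := by
        rw [Real.cos_arcsin]
        have h1 : 1 - s ^ 2 = (-(b * (Real.cosh x * Real.cosh z))) ^ 2 := by
          linear_combination -key
        rw [h1, Real.sqrt_sq_eq_abs, abs_of_nonneg]
        nlinarith [mul_pos (Real.cosh_pos x) (Real.cosh_pos z)]
      simp only [scherkGauss]
      refine Prod.ext hz (Prod.ext ?_ hx)
      show -Real.cos (Real.arcsin s) / (Real.cosh x * Real.cosh z) = b
      rw [hcosb]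
      field_simp
end

section
/- The Gauss map sends the curves {y = ±π/2} of the Scherk surface onto alternate open arcs of the equator of the unit sphere: the image of {(x, y, z) : sin y = sinh x · sinh z, y = π/2} under ν equals {(a, 0, c) : a² + c² = 1 and a·c > 0}, and the image of {(x, y, z) : sin y = sinh x · sinh z, y = −π/2} under ν equals {(a, 0, c) : a² + c² = 1 and a·c < 0}. -/
open Real

lemma tanh_sq_add (x z : ℝ) (h : (Real.sinh x * Real.sinh z) ^ 2 = 1) :
    Real.tanh z ^ 2 + Real.tanh x ^ 2 = 1 := by
  rw [Real.tanh_eq_sinh_div_cosh, Real.tanh_eq_sinh_div_cosh]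
  have hx := Real.cosh_pos x
  have hz := Real.cosh_pos z
  have cx := Real.cosh_sq x
  have cz := Real.cosh_sq z
  field_simp
  nlinarith [sq_nonneg (Real.sinh x - Real.sinh z), sq_nonneg (Real.sinh x + Real.sinh z)]

lemma tanh_mul (x z : ℝ) :
    Real.tanh z * Real.tanh x
      = Real.sinh x * Real.sinh z / (Real.cosh x * Real.cosh z) := by
  rw [Real.tanh_eq_sinh_div_cosh, Real.tanh_eq_sinh_div_cosh]
  ring

lemma tanh_arsinh_aux (a c : ℝ) (h : a ^ 2 + c ^ 2 = 1) (ha : a ≠ 0) :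
    Real.tanh (Real.arsinh (c / |a|)) = c := by
  rw [Real.tanh_eq_sinh_div_cosh, Real.sinh_arsinh, Real.cosh_arsinh]
  have ha' : (0:ℝ) < |a| := abs_pos.mpr ha
  have h1 : 1 + (c / |a|) ^ 2 = (1 / |a|) ^ 2 := by
    field_simp
    nlinarith [sq_abs a]
  rw [h1, Real.sqrt_sq (by positivity)]
  field_simp

/-- The Gauss map sends the curves `{y = π/2}` and `{y = -π/2}` of the Scherk surface
onto the alternate open arcs `{ac > 0}` resp. `{ac < 0}` of the equator
`{(a, 0, c) : a² + c² = 1}` of the unit sphere. -/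
theorem scherkGauss_image_boundary_curves :
    scherkGauss '' {p : ℝ × ℝ × ℝ |
        Real.sin p.2.1 = Real.sinh p.1 * Real.sinh p.2.2 ∧ p.2.1 = π / 2} =
      {q : ℝ × ℝ × ℝ | q.2.1 = 0 ∧ q.1 ^ 2 + q.2.2 ^ 2 = 1 ∧ 0 < q.1 * q.2.2} ∧
    scherkGauss '' {p : ℝ × ℝ × ℝ |
        Real.sin p.2.1 = Real.sinh p.1 * Real.sinh p.2.2 ∧ p.2.1 = -(π / 2)} =
      {q : ℝ × ℝ × ℝ | q.2.1 = 0 ∧ q.1 ^ 2 + q.2.2 ^ 2 = 1 ∧ q.1 * q.2.2 < 0} := by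
  constructor
  · ext ⟨a, b, c⟩
    simp only [Set.mem_image, Set.mem_setOf_eq]
    constructor
    · rintro ⟨⟨x, y, z⟩, ⟨hs, hy⟩, hg⟩
      subst hy
      rw [Real.sin_pi_div_two] at hs
      simp only [scherkGauss, Real.cos_pi_div_two, neg_zero, zero_div] at hg
      obtain ⟨ha, hb, hc⟩ : Real.tanh z = a ∧ (0:ℝ) = b ∧ Real.tanh x = c := by
        simpa [Prod.ext_iff] using hg
      subst ha; subst hc
      refine ⟨hb.symm, tanh_sq_add x z (by rw [← hs]; norm_num), ?_⟩
      rw [tanh_mul, ← hs]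
      positivity
    · rintro ⟨hb, h1, h2⟩
      have ha : a ≠ 0 := fun h => by simp [h] at h2
      have hc : c ≠ 0 := fun h => by simp [h] at h2
      refine ⟨(Real.arsinh (c / |a|), π / 2, Real.arsinh (a / |c|)), ⟨?_, rfl⟩, ?_⟩
      · rw [Real.sin_pi_div_two, Real.sinh_arsinh, Real.sinh_arsinh]
        rw [div_mul_div_comm, ← abs_mul]
        rw [abs_of_pos (by linarith [mul_comm a c])]
        field_simp
      · simp only [scherkGauss, Real.cos_pi_div_two, neg_zero, zero_div]
        rw [tanh_arsinh_aux a c h1 ha,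
          tanh_arsinh_aux c a (by linarith) hc, hb]
  · ext ⟨a, b, c⟩
    simp only [Set.mem_image, Set.mem_setOf_eq]
    constructor
    · rintro ⟨⟨x, y, z⟩, ⟨hs, hy⟩, hg⟩
      subst hy
      rw [Real.sin_neg, Real.sin_pi_div_two] at hs
      simp only [scherkGauss, Real.cos_neg, Real.cos_pi_div_two, neg_zero, zero_div] at hg
      obtain ⟨ha, hb, hc⟩ : Real.tanh z = a ∧ (0:ℝ) = b ∧ Real.tanh x = c := by
        simpa [Prod.ext_iff] using hg
      subst ha; subst hc
      refine ⟨hb.symm, tanh_sq_add x z (by rw [← hs]; norm_num), ?_⟩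
      rw [tanh_mul, ← hs]
      have hx := Real.cosh_pos x
      have hz := Real.cosh_pos z
      apply div_neg_of_neg_of_pos <;> [norm_num; positivity]
    · rintro ⟨hb, h1, h2⟩
      have ha : a ≠ 0 := fun h => by simp [h] at h2
      have hc : c ≠ 0 := fun h => by simp [h] at h2
      refine ⟨(Real.arsinh (c / |a|), -(π / 2), Real.arsinh (a / |c|)), ⟨?_, rfl⟩, ?_⟩
      · rw [Real.sin_neg, Real.sin_pi_div_two, Real.sinh_arsinh, Real.sinh_arsinh]
        rw [div_mul_div_comm, ← abs_mul]
        rw [abs_of_neg (by linarith [mul_comm a c])]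
        field_simp
      · simp only [scherkGauss, Real.cos_neg, Real.cos_pi_div_two, neg_zero, zero_div]
        rw [tanh_arsinh_aux a c h1 ha,
          tanh_arsinh_aux c a (by linarith) hc, hb]
end

section
/- The Scherk surface is a minimal surface: the function f(x, y) = arsinh(sin y / sinh x), defined for x > 0 and y ∈ ℝ (whose graph z = f(x, y) parametrizes the part of the Scherk surface with x > 0), satisfies the minimal surface equation (1 + (∂f/∂y)²)·∂²f/∂x² − 2·(∂f/∂x)·(∂f/∂y)·∂²f/∂x∂y + (1 + (∂f/∂x)²)·∂²f/∂y² = 0 at every point (x, y) with x > 0. -/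
open Real

private noncomputable def scherkQ (a b : ℝ) : ℝ := Real.sqrt (Real.sinh a ^ 2 + Real.sin b ^ 2)

private lemma scherkQ_pos (a b : ℝ) (ha : 0 < a) : 0 < scherkQ a b := by
  have hs : 0 < Real.sinh a := Real.sinh_pos_iff.2 ha
  exact Real.sqrt_pos.2 (by positivity)

private lemma scherkQ_sq (a b : ℝ) : scherkQ a b ^ 2 = Real.sinh a ^ 2 + Real.sin b ^ 2 :=
  Real.sq_sqrt (by positivity)

private lemma hasDerivAt_scherkQ_x (a b : ℝ) (ha : 0 < a) :
    HasDerivAt (fun t => scherkQ t b)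
      (Real.sinh a * Real.cosh a / scherkQ a b) a := by
  have h1 : HasDerivAt (fun t => Real.sinh t ^ 2 + Real.sin b ^ 2)
      (2 * Real.sinh a * Real.cosh a) a := by
    have := ((Real.hasDerivAt_sinh a).pow 2).add_const (Real.sin b ^ 2)
    simpa using this
  have hne : Real.sinh a ^ 2 + Real.sin b ^ 2 ≠ 0 := by
    have := scherkQ_pos a b ha
    have := scherkQ_sq a b
    nlinarith
  have := h1.sqrt hne
  convert this using 1
  have hq := (scherkQ_pos a b ha).ne'
  unfold scherkQ
  field_simp
  simp only [scherkQ, add_comm]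
  ring

private lemma hasDerivAt_scherkQ_y (a b : ℝ) (ha : 0 < a) :
    HasDerivAt (fun t => scherkQ a t)
      (Real.sin b * Real.cos b / scherkQ a b) b := by
  have h1 : HasDerivAt (fun t => Real.sinh a ^ 2 + Real.sin t ^ 2)
      (2 * Real.sin b * Real.cos b) b := by
    have := (((Real.hasDerivAt_sin b).pow 2).const_add (Real.sinh a ^ 2))
    simpa [mul_comm, mul_assoc] using this
  have hne : Real.sinh a ^ 2 + Real.sin b ^ 2 ≠ 0 := by
    have := scherkQ_pos a b ha
    have := scherkQ_sq a b
    nlinarith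
  have := h1.sqrt hne
  convert this using 1
  have hq := (scherkQ_pos a b ha).ne'
  unfold scherkQ
  field_simp
  simp only [scherkQ, add_comm]
  ring

private lemma sqrt_one_add (a b : ℝ) (ha : 0 < a) :
    Real.sqrt (1 + (Real.sin b / Real.sinh a) ^ 2) = scherkQ a b / Real.sinh a := by
  have hs : 0 < Real.sinh a := Real.sinh_pos_iff.2 ha
  rw [show 1 + (Real.sin b / Real.sinh a) ^ 2
      = (Real.sinh a ^ 2 + Real.sin b ^ 2) / Real.sinh a ^ 2 by field_simp]
  rw [Real.sqrt_div (by positivity), Real.sqrt_sq hs.le]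
  rfl

private lemma hasDerivAt_scherkF_x (a b : ℝ) (ha : 0 < a) :
    HasDerivAt (fun t => Real.arsinh (Real.sin b / Real.sinh t))
      (-(Real.sin b * Real.cosh a) / (Real.sinh a * scherkQ a b)) a := by
  have hs : 0 < Real.sinh a := Real.sinh_pos_iff.2 ha
  have hq : 0 < scherkQ a b := scherkQ_pos a b ha
  have hinner : HasDerivAt (fun t => Real.sin b / Real.sinh t)
      (-(Real.sin b * Real.cosh a) / Real.sinh a ^ 2) a := by
    have := (hasDerivAt_const a (Real.sin b)).div (Real.hasDerivAt_sinh a) hs.ne'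
    refine this.congr_deriv ?_
    ring
  have := (Real.hasDerivAt_arsinh (Real.sin b / Real.sinh a)).comp a hinner
  refine this.congr_deriv ?_
  rw [sqrt_one_add a b ha]
  field_simp

private lemma hasDerivAt_scherkF_y (a b : ℝ) (ha : 0 < a) :
    HasDerivAt (fun t => Real.arsinh (Real.sin t / Real.sinh a))
      (Real.cos b / scherkQ a b) b := by
  have hs : 0 < Real.sinh a := Real.sinh_pos_iff.2 ha
  have hq : 0 < scherkQ a b := scherkQ_pos a b ha
  have hinner : HasDerivAt (fun t => Real.sin t / Real.sinh a)
      (Real.cos b / Real.sinh a) b := (Real.hasDerivAt_sin b).div_const _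
  have := (Real.hasDerivAt_arsinh (Real.sin b / Real.sinh a)).comp b hinner
  refine this.congr_deriv ?_
  rw [sqrt_one_add a b ha]
  field_simp

/-- The Scherk surface is minimal: the function `f(x, y) = arsinh(sin y / sinh x)`,
whose graph `z = f(x, y)` parametrizes the part `x > 0` of the Scherk surface, satisfies
the minimal surface equation
`(1 + f_y²) f_xx - 2 f_x f_y f_xy + (1 + f_x²) f_yy = 0` for all `x > 0`. -/
theorem scherk_minimal_surface_equation (x y : ℝ) (hx : 0 < x) :
    let f : ℝ → ℝ → ℝ := fun a b => Real.arsinh (Real.sin b / Real.sinh a)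
    let fx : ℝ → ℝ → ℝ := fun a b => deriv (fun t => f t b) a
    let fy : ℝ → ℝ → ℝ := fun a b => deriv (fun t => f a t) b
    let fxx : ℝ → ℝ → ℝ := fun a b => deriv (fun t => fx t b) a
    let fyy : ℝ → ℝ → ℝ := fun a b => deriv (fun t => fy a t) b
    let fxy : ℝ → ℝ → ℝ := fun a b => deriv (fun t => fy t b) a
    (1 + fy x y ^ 2) * fxx x y - 2 * fx x y * fy x y * fxy x y
      + (1 + fx x y ^ 2) * fyy x y = 0 := by
  intro f fx fy fxx fyy fxy
  have hs : 0 < Real.sinh x := Real.sinh_pos_iff.2 hx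
  have hq : 0 < scherkQ x y := scherkQ_pos x y hx
  -- first derivative formulas (for all a > 0)
  have hfx : ∀ a, 0 < a → ∀ b, fx a b = -(Real.sin b * Real.cosh a) / (Real.sinh a * scherkQ a b) :=
    fun a ha b => (hasDerivAt_scherkF_x a b ha).deriv
  have hfy : ∀ a, 0 < a → ∀ b, fy a b = Real.cos b / scherkQ a b :=
    fun a ha b => (hasDerivAt_scherkF_y a b ha).deriv
  -- fxx
  have hfxx : fxx x y = deriv (fun t => -(Real.sin y * Real.cosh t) / (Real.sinh t * scherkQ t y)) x := by
    apply Filter.EventuallyEq.deriv_eq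
    filter_upwards [eventually_gt_nhds hx] with t ht
    exact hfx t ht y
  have hN : HasDerivAt (fun t => -(Real.sin y * Real.cosh t)) (-(Real.sin y * Real.sinh x)) x := by
    have := ((Real.hasDerivAt_cosh x).const_mul (Real.sin y)).neg
    exact this
  have hD : HasDerivAt (fun t => Real.sinh t * scherkQ t y)
      (Real.cosh x * scherkQ x y + Real.sinh x * (Real.sinh x * Real.cosh x / scherkQ x y)) x :=
    (Real.hasDerivAt_sinh x).mul (hasDerivAt_scherkQ_x x y hx)
  have hDne : Real.sinh x * scherkQ x y ≠ 0 := by positivity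
  have hfxx' : fxx x y =
      (-(Real.sin y * Real.sinh x) * (Real.sinh x * scherkQ x y) -
        -(Real.sin y * Real.cosh x) *
          (Real.cosh x * scherkQ x y + Real.sinh x * (Real.sinh x * Real.cosh x / scherkQ x y))) /
        (Real.sinh x * scherkQ x y) ^ 2 := by
    rw [hfxx]; exact (hN.div hD hDne).deriv
  -- fxy
  have hfxy : fxy x y = deriv (fun t => Real.cos y / scherkQ t y) x := by
    apply Filter.EventuallyEq.deriv_eq
    filter_upwards [eventually_gt_nhds hx] with t ht
    exact hfy t ht y
  have hfxy' : fxy x y =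
      (0 * scherkQ x y - Real.cos y * (Real.sinh x * Real.cosh x / scherkQ x y)) / scherkQ x y ^ 2 := by
    rw [hfxy]
    exact ((hasDerivAt_const x (Real.cos y)).div (hasDerivAt_scherkQ_x x y hx) hq.ne').deriv
  -- fyy
  have hfyy : fyy x y = deriv (fun t => Real.cos t / scherkQ x t) y := by
    apply Filter.EventuallyEq.deriv_eq
    filter_upwards with t
    exact hfy x hx t
  have hfyy' : fyy x y =
      (-Real.sin y * scherkQ x y - Real.cos y * (Real.sin y * Real.cos y / scherkQ x y)) /
        scherkQ x y ^ 2 := by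
    rw [hfyy]
    exact ((Real.hasDerivAt_cos y).div (hasDerivAt_scherkQ_y x y hx) hq.ne').deriv
  rw [hfx x hx y, hfy x hx y, hfxx', hfxy', hfyy']
  have hq2 : scherkQ x y ^ 2 = Real.sinh x ^ 2 + Real.sin y ^ 2 := scherkQ_sq x y
  have hc2 : Real.cosh x ^ 2 = Real.sinh x ^ 2 + 1 := Real.cosh_sq x
  have huv : Real.sin y ^ 2 + Real.cos y ^ 2 = 1 := Real.sin_sq_add_cos_sq y
  set s := Real.sinh x
  set c := Real.cosh x
  set u := Real.sin y
  set v := Real.cos y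
  set q := scherkQ x y
  field_simp
  linear_combination
    (u * (2*s^2*q^2)) * hc2
    + (u * (-2*s^2*q^2)) * huv
    + (u * (-2*s^2*q^2 + c^2*(q^2+v^2))) * hq2
end

section
/- Supersolution estimate in spherical coordinates (Lemma 4.7): let 0 < β < π/2 satisfy −cos β/sin β + 4β < 0. Then for every φ with 0 < φ < β, the function ζ(φ) = 2β − φ satisfies −cos φ/sin φ + 2(2β − φ) < −cos β/sin β + 4β < 0. (The left-hand side is the value of Δζ + 2ζ for the rotationally symmetric Laplacian on the sphere, so ζ is a positive supersolution of Δ + 2 on the annulus 0 < φ < β.) -/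
open Real

/-- Supersolution estimate in spherical coordinates: if `0 < β < π/2` satisfies
`-cos β/sin β + 4β < 0`, then for `0 < φ < β` the function `ζ(φ) = 2β - φ` satisfies
`Δζ + 2ζ = -cos φ/sin φ + 2(2β - φ) < -cos β/sin β + 4β < 0`, so `ζ` is a positive
supersolution of `Δ + 2` on the annulus `0 < φ < β`. -/
theorem spherical_supersolution (β : ℝ) (hβ0 : 0 < β) (hβπ : β < π / 2)
    (hβ : -Real.cos β / Real.sin β + 4 * β < 0)
    (φ : ℝ) (hφ0 : 0 < φ) (hφβ : φ < β) :
    -Real.cos φ / Real.sin φ + 2 * (2 * β - φ) < -Real.cos β / Real.sin β + 4 * β ∧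
    -Real.cos β / Real.sin β + 4 * β < 0 := by
  refine ⟨?_, hβ⟩
  have hsφ : 0 < Real.sin φ := Real.sin_pos_of_pos_of_lt_pi hφ0 (by linarith [Real.pi_pos])
  have hsβ : 0 < Real.sin β := Real.sin_pos_of_pos_of_lt_pi hβ0 (by linarith [Real.pi_pos])
  have key : -Real.cos φ / Real.sin φ < -Real.cos β / Real.sin β := by
    rw [div_lt_div_iff₀ hsφ hsβ]
    have h : Real.sin (β - φ) > 0 :=
      Real.sin_pos_of_pos_of_lt_pi (by linarith) (by linarith [Real.pi_pos])
    rw [Real.sin_sub] at h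
    nlinarith
  linarith
end

section
/- The bending maps intertwine the reflections of the Scherk surface with Euclidean reflections across planes through the cylinder axis: for every τ ≠ 0, every c ∈ ℝ and every (x, y, z) ∈ ℝ³, writing Φ_τ(x, y, z) = (X, Y, Z), one has Φ_τ(x, 2c − y, z) = (cos(2τc)·(X + 1/τ) + sin(2τc)·Y − 1/τ, sin(2τc)·(X + 1/τ) − cos(2τc)·Y, Z); that is, Φ_τ ∘ (reflection y ↦ 2c − y) equals (reflection of ℝ³ across the plane containing the line {x = −1/τ, y = 0} and making angle τc with the plane y = 0) ∘ Φ_τ. -/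
/-- The bending map `Φ_τ` for `τ ≠ 0`. -/
noncomputable def bendingMap (τ : ℝ) (p : ℝ × ℝ × ℝ) : ℝ × ℝ × ℝ :=
  ((Real.exp (τ * p.1) * Real.cos (τ * p.2.1) - 1) / τ,
   Real.exp (τ * p.1) * Real.sin (τ * p.2.1) / τ, p.2.2)

/-- The bending maps intertwine the reflection `y ↦ 2c - y` with the Euclidean reflection
of `ℝ³` across the plane through the cylinder axis `{x = -1/τ, y = 0}` making angle `τc`
with the plane `y = 0`: writing `Φ_τ(x, y, z) = (X, Y, Z)`,
`Φ_τ(x, 2c - y, z) = (cos(2τc)(X + 1/τ) + sin(2τc)Y - 1/τ, sin(2τc)(X + 1/τ) - cos(2τc)Y, Z)`. -/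
theorem bendingMap_reflection (τ : ℝ) (hτ : τ ≠ 0) (c x y z : ℝ) :
    bendingMap τ (x, 2 * c - y, z) =
      (Real.cos (2 * τ * c) * ((bendingMap τ (x, y, z)).1 + 1 / τ)
          + Real.sin (2 * τ * c) * (bendingMap τ (x, y, z)).2.1 - 1 / τ,
       Real.sin (2 * τ * c) * ((bendingMap τ (x, y, z)).1 + 1 / τ)
          - Real.cos (2 * τ * c) * (bendingMap τ (x, y, z)).2.1,
       (bendingMap τ (x, y, z)).2.2) := by
  simp only [bendingMap, Prod.mk.injEq]
  have h : τ * (2 * c - y) = 2 * τ * c - τ * y := by ring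
  rw [h, Real.cos_sub, Real.sin_sub]
  refine ⟨?_, ?_, trivial⟩ <;> field_simp <;> ring
end
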